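/- Let r ≥ 2 be a real number. Then for all a ≥ 0 and all t ≥ 0: φ_a(2t) ≤ 2^r φ_a(t), where φ_a(u) = ∫_0^u (a+σ)^{r−2} σ dσ. In particular the Δ₂ constant of φ_a is bounded by 2^r uniformly in a. -/

import Mathlib

/-!
Substituting `s = 2σ` gives `φ_a(2t) = 2 ∫_0^t φ_a'(2σ) dσ`, and `φ_a'(2σ) ≤ 2^(r-1) φ_a'(σ)`
because `a + 2σ ≤ 2(a + σ)` and `r - 2 ≥ 0`.
-/

open MeasureTheory

/-- The shifted function `φ_a(t) = ∫_0^t (a+s)^{r−2} s ds`. -/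
noncomputable def phi (r a t : ℝ) : ℝ := ∫ s in (0 : ℝ)..t, (a + s) ^ (r - 2) * s

open Set

theorem intervalIntegral.integral_zero_two_mul_le {f : ℝ → ℝ} {C t : ℝ} (ht : 0 ≤ t)
    (hf : IntervalIntegrable f volume 0 (2 * t))
    (hdouble : ∀ s ∈ Icc 0 t, f (2 * s) ≤ C * f s) :
    ∫ s in 0..2 * t, f s ≤ 2 * C * ∫ s in 0..t, f s := by
  have hf_half : IntervalIntegrable f volume 0 t :=
    hf.mono_set (uIcc_subset_uIcc_left (mem_uIcc.mpr (Or.inl ⟨ht, by linarith⟩)))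
  have hf_comp : IntervalIntegrable (fun s => f (2 * s)) volume 0 t := by
    simpa using hf.comp_mul_left (c := 2)
  calc ∫ s in 0..2 * t, f s = 2 * ∫ s in 0..t, f (2 * s) := by
        have := intervalIntegral.smul_integral_comp_mul_left f (2 : ℝ) (a := 0) (b := t)
        rw [mul_zero, smul_eq_mul] at this
        exact this.symm
    _ ≤ 2 * ∫ s in 0..t, C * f s := by
        gcongr
        exact intervalIntegral.integral_mono_on ht hf_comp (hf_half.const_mul C) hdouble
    _ = 2 * C * ∫ s in 0..t, f s := by
        rw [intervalIntegral.integral_const_mul, mul_assoc]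

theorem Real.add_two_mul_rpow_le {a s p : ℝ} (ha : 0 ≤ a) (hs : 0 ≤ s) (hp : 0 ≤ p) :
    (a + 2 * s) ^ p ≤ 2 ^ p * (a + s) ^ p := by
  rw [← Real.mul_rpow zero_le_two (by positivity)]
  exact Real.rpow_le_rpow (by positivity) (by linarith) hp

theorem continuous_phi_integrand {r : ℝ} (hr : 2 ≤ r) (a : ℝ) :
    Continuous fun s : ℝ => (a + s) ^ (r - 2) * s := by
  fun_prop (disch := linarith)

theorem phi_integrand_two_mul_le {r a s : ℝ} (hr : 2 ≤ r) (ha : 0 ≤ a) (hs : 0 ≤ s) :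
    (a + 2 * s) ^ (r - 2) * (2 * s) ≤ 2 ^ (r - 1) * ((a + s) ^ (r - 2) * s) := by
  have h2 : (2 : ℝ) ^ (r - 1) = 2 ^ (r - 2) * 2 := by
    rw [← Real.rpow_add_one two_ne_zero]; ring_nf
  calc (a + 2 * s) ^ (r - 2) * (2 * s) ≤ 2 ^ (r - 2) * (a + s) ^ (r - 2) * (2 * s) := by
        gcongr
        exact Real.add_two_mul_rpow_le ha hs (by linarith)
    _ = 2 ^ (r - 1) * ((a + s) ^ (r - 2) * s) := by rw [h2]; ring

/-- Doubling (Δ₂) bound for the shifted functions, uniform in the shift `a`: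
for `r ≥ 2`, `φ_a(2t) ≤ 2^r φ_a(t)` for all `a, t ≥ 0`. -/
theorem phi_doubling
    (r : ℝ) (hr : 2 ≤ r) :
    ∀ a t : ℝ, 0 ≤ a → 0 ≤ t →
      phi r a (2 * t) ≤ (2 : ℝ) ^ r * phi r a t := by
  intro a t ha ht
  have h2r : (2 : ℝ) ^ r = 2 * 2 ^ (r - 1) := by
    rw [← Real.rpow_one_add' zero_le_two (by linarith)]; ring_nf
  rw [h2r]
  exact intervalIntegral.integral_zero_two_mul_le ht
    ((continuous_phi_integrand hr a).intervalIntegrable _ _)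
    fun s hs => phi_integrand_two_mul_le hr ha hs.1
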